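/- arXiv:2412.08284 — 2 statements merged into one kernel-verified Lean document; each statement's English description precedes it below -/
import Mathlib

section
/- Under the assumptions of the previous statement, if additionally there exists some j ∈ L with p_j > 0 and Δ_j > Δ_{j*}, then the inequality is strict: ∑_{j∈L} Δ_j · p'_j < ∑_{j∈L} Δ_j · p_j. -/
open Finset

section MassTransfer

variable {ι R : Type*} [DecidableEq ι] {L : Finset ι} {j₀ : ι}

theorem sum_mul_transfer_eq [CommRing R] (h₀ : j₀ ∈ L) (Δ p p' : ι → R) (τ : R)
    (hne : ∀ j ∈ L, j ≠ j₀ → p' j = (1 - τ) * p j)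
    (hstar : p' j₀ = p j₀ + τ * ∑ j ∈ L.erase j₀, p j) :
    ∑ j ∈ L, Δ j * p' j =
      ∑ j ∈ L, Δ j * p j - τ * ∑ j ∈ L.erase j₀, (Δ j - Δ j₀) * p j := by
  have hrest : ∑ j ∈ L.erase j₀, Δ j * p' j =
      ∑ j ∈ L.erase j₀, (Δ j * p j - τ * ((Δ j - Δ j₀) * p j) - Δ j₀ * (τ * p j)) :=
    sum_congr rfl fun j hj => by
      rw [hne j (mem_of_mem_erase hj) (ne_of_mem_erase hj)]
      ring
  rw [← sum_erase_add L _ h₀, ← sum_erase_add L (fun j => Δ j * p j) h₀, hrest, hstar,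
    sum_sub_distrib, sum_sub_distrib, ← mul_sum, ← mul_sum, ← mul_sum]
  ring

theorem sum_excess_mul_pos [CommRing R] [LinearOrder R] [IsStrictOrderedRing R] {Δ p : ι → R}
    (hp : ∀ j ∈ L, 0 ≤ p j) (hmin : ∀ j ∈ L, Δ j₀ ≤ Δ j)
    (hstrict : ∃ j ∈ L, 0 < p j ∧ Δ j₀ < Δ j) :
    0 < ∑ j ∈ L.erase j₀, (Δ j - Δ j₀) * p j := by
  obtain ⟨k, hkL, hpk, hΔk⟩ := hstrict
  have hk : k ∈ L.erase j₀ := mem_erase.2 ⟨fun h => hΔk.ne (congrArg Δ h.symm), hkL⟩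
  refine sum_pos' (fun j hj => ?_) ⟨k, hk, ?_⟩
  · exact mul_nonneg (sub_nonneg.2 (hmin j (mem_of_mem_erase hj))) (hp j (mem_of_mem_erase hj))
  · exact mul_pos (sub_pos.2 hΔk) hpk

end MassTransfer

theorem stmt_2_general {ι : Type*} [DecidableEq ι] (L : Finset ι)
    (Δ : ι → ℝ) (p : ι → ℝ) (hp : ∀ j ∈ L, 0 ≤ p j)
    (τ : ℝ) (hτ0 : 0 < τ)
    (jstar : ι) (hjstar : jstar ∈ L) (hmin : ∀ j ∈ L, Δ jstar ≤ Δ j)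
    (p' : ι → ℝ)
    (hp'ne : ∀ j ∈ L, j ≠ jstar → p' j = (1 - τ) * p j)
    (hp'star : p' jstar = p jstar + τ * ∑ j ∈ L.erase jstar, p j)
    (hstrict : ∃ j ∈ L, 0 < p j ∧ Δ jstar < Δ j) :
    ∑ j ∈ L, Δ j * p' j < ∑ j ∈ L, Δ j * p j := by
  rw [sum_mul_transfer_eq hjstar Δ p p' τ hp'ne hp'star]
  exact sub_lt_self _ (mul_pos hτ0 (sum_excess_mul_pos hp hmin hstrict))

/-- Strict descent: if some index with positive mass has Δ_j > Δ_{j*}, the weighted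
sum strictly decreases under the DTO-O update. -/
theorem stmt_2 {ι : Type*} [DecidableEq ι] (L : Finset ι) (hL : L.Nonempty)
    (Δ : ι → ℝ) (p : ι → ℝ) (hp : ∀ j ∈ L, 0 ≤ p j) (hsum : ∑ j ∈ L, p j = 1)
    (τ : ℝ) (hτ0 : 0 < τ) (hτ1 : τ ≤ 1)
    (jstar : ι) (hjstar : jstar ∈ L) (hmin : ∀ j ∈ L, Δ jstar ≤ Δ j)
    (p' : ι → ℝ)
    (hp'ne : ∀ j ∈ L, j ≠ jstar → p' j = (1 - τ) * p j)
    (hp'star : p' jstar = p jstar + τ * ∑ j ∈ L.erase jstar, p j)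
    (hstrict : ∃ j ∈ L, 0 < p j ∧ Δ jstar < Δ j) :
    ∑ j ∈ L, Δ j * p' j < ∑ j ∈ L, Δ j * p j :=
  stmt_2_general L Δ p hp τ hτ0 jstar hjstar hmin p' hp'ne hp'star hstrict
end

section
/- Suppose n servers have capacities μ_1, …, μ_n > 0 and total load Λ ≥ 0 with Λ < ∑ μ_j must be distributed as loads λ_j ≥ 0 with ∑ λ_j = Λ. If an allocation minimizes ∑_j λ_j/(μ_j − λ_j), then at the optimum all servers with positive load have equal marginal delay μ_j/(μ_j − λ_j)², i.e., for any j, k with λ_j > 0 and λ_k > 0, μ_j/(μ_j − λ_j)² = μ_k/(μ_k − λ_k)² provided the optimum is interior (all λ_j ∈ (0, μ_j)). -/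
/-!
Shifting `t` units of load from server `k` to server `j` keeps the allocation feasible for
small `|t|`, because the optimum is interior. Along this one-parameter family the separable
objective changes only in its `j`-th and `k`-th terms, so `t = 0` is a local minimum of
`t ↦ g_j (λ_j + t) + g_k (λ_k - t)` and Fermat's rule equates the two marginal costs; for
`g(y) = y / (μ - y)` the marginal cost is `μ / (μ - y)²`.
-/

open Filter Topology Set

theorem hasDerivAt_div_const_sub {c x : ℝ} (hx : x ≠ c) :
    HasDerivAt (fun y => y / (c - y)) (c / (c - x) ^ 2) x :=
  ((hasDerivAt_id' x).div ((hasDerivAt_id' x).const_sub c) (sub_ne_zero.2 hx.symm)).congr_deriv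
    (by ring)

section Transfer

variable {ι : Type*} [DecidableEq ι]

def transfer (x : ι → ℝ) (j k : ι) (t : ℝ) : ι → ℝ :=
  x + Pi.single j t - Pi.single k t

theorem transfer_zero (x : ι → ℝ) (j k : ι) : transfer x j k 0 = x := by
  simp [transfer]

theorem continuous_transfer (x : ι → ℝ) (j k : ι) : Continuous (transfer x j k) :=
  (continuous_const.add (continuous_single (A := fun _ => ℝ) j)).sub
    (continuous_single (A := fun _ => ℝ) k)

variable [Fintype ι]

theorem sum_transfer (x : ι → ℝ) (j k : ι) (t : ℝ) :
    ∑ i, transfer x j k t i = ∑ i, x i := by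
  simp [transfer, Finset.sum_add_distrib, Finset.sum_sub_distrib]

theorem sum_comp_transfer (g : ι → ℝ → ℝ) (x : ι → ℝ) {j k : ι} (hjk : j ≠ k) (t : ℝ) :
    ∑ i, g i (transfer x j k t i) =
      ∑ i, g i (x i) + (g j (x j + t) - g j (x j)) + (g k (x k - t) - g k (x k)) := by
  have hchange : ∑ i, (g i (transfer x j k t i) - g i (x i)) =
      (g j (x j + t) - g j (x j)) + (g k (x k - t) - g k (x k)) := by
    refine (Finset.sum_eq_add j k hjk (fun i _ hi => ?_) (by simp) (by simp)).trans ?_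
    · simp [transfer, hi.1, hi.2]
    · simp [transfer, hjk, hjk.symm]
  rw [Finset.sum_sub_distrib] at hchange
  linarith

theorem HasDerivAt.eq_of_forall_le_sum_transfer {g : ι → ℝ → ℝ} {x : ι → ℝ} {j k : ι}
    (hjk : j ≠ k) {dj dk : ℝ} (hj : HasDerivAt (g j) dj (x j)) (hk : HasDerivAt (g k) dk (x k))
    (hmin : ∀ᶠ t in 𝓝 0, ∑ i, g i (x i) ≤ ∑ i, g i (transfer x j k t i)) :
    dj = dk := by
  have hlocal : IsLocalMin (fun t => g j (x j + t) + g k (x k - t)) 0 := by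
    filter_upwards [hmin] with t ht
    rw [sum_comp_transfer g x hjk] at ht
    simp only [add_zero, sub_zero]
    linarith
  have hderiv : HasDerivAt (fun t => g j (x j + t) + g k (x k - t)) (dj + -dk) 0 :=
    (HasDerivAt.comp_const_add (x j) 0 (by rwa [add_zero])).add
      (HasDerivAt.comp_const_sub (x k) 0 (by rwa [sub_zero]))
  linarith [hlocal.hasDerivAt_eq_zero hderiv]

theorem eventually_transfer_mem_pi_Ioo {x a b : ι → ℝ} (hx : ∀ i, x i ∈ Ioo (a i) (b i))
    (j k : ι) : ∀ᶠ t in 𝓝 0, transfer x j k t ∈ univ.pi fun i => Ioo (a i) (b i) := by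
  have hopen : IsOpen (univ.pi fun i => Ioo (a i) (b i)) :=
    isOpen_set_pi finite_univ fun i _ => isOpen_Ioo
  refine (continuous_transfer x j k).continuousAt.preimage_mem_nhds (hopen.mem_nhds ?_)
  simpa [transfer_zero] using hx

end Transfer

theorem stmt_12_general {n : ℕ} (μ lam : Fin n → ℝ) (Λ : ℝ)
    (hsum : ∑ j, lam j = Λ)
    (hint : ∀ j, lam j ∈ Set.Ioo 0 (μ j))
    (hopt : ∀ lam' : Fin n → ℝ, (∀ j, 0 ≤ lam' j ∧ lam' j < μ j) →
      ∑ j, lam' j = Λ →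
      ∑ j, lam j / (μ j - lam j) ≤ ∑ j, lam' j / (μ j - lam' j)) :
    ∀ j k, 0 < lam j → 0 < lam k →
      μ j / (μ j - lam j)^2 = μ k / (μ k - lam k)^2 := by
  intro j k _ _
  rcases eq_or_ne j k with rfl | hjk
  · rfl
  refine HasDerivAt.eq_of_forall_le_sum_transfer (g := fun i y => y / (μ i - y)) hjk
    (hasDerivAt_div_const_sub (hint j).2.ne) (hasDerivAt_div_const_sub (hint k).2.ne) ?_
  filter_upwards [eventually_transfer_mem_pi_Ioo hint j k] with t ht
  exact hopt _ (fun i => ⟨(ht i trivial).1.le, (ht i trivial).2⟩)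
    ((sum_transfer lam j k t).trans hsum)

/-- At an interior optimum of the load-balancing problem, all servers with
positive load have equal marginal delay μ_j/(μ_j − λ_j)². -/
theorem stmt_12 {n : ℕ} (μ lam : Fin n → ℝ) (Λ : ℝ)
    (hμ : ∀ j, 0 < μ j) (hΛ0 : 0 ≤ Λ) (hΛ : Λ < ∑ j, μ j)
    (hsum : ∑ j, lam j = Λ)
    (hint : ∀ j, lam j ∈ Set.Ioo 0 (μ j))
    (hopt : ∀ lam' : Fin n → ℝ, (∀ j, 0 ≤ lam' j ∧ lam' j < μ j) →
      ∑ j, lam' j = Λ →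
      ∑ j, lam j / (μ j - lam j) ≤ ∑ j, lam' j / (μ j - lam' j)) :
    ∀ j k, 0 < lam j → 0 < lam k →
      μ j / (μ j - lam j)^2 = μ k / (μ k - lam k)^2 :=
  stmt_12_general μ lam Λ hsum hint hopt
end
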